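/- Every probability measure μ on [0,1] ∪ {∞} solving the equation ∫_{[0,t]} s dμ(s) = μ([0,t])² for all t ∈ [0,1] has cumulative distribution function F(t) = μ([0,t]) satisfying: wherever F is continuous and has no atoms on an interval, F is constant on regions where F(t) ≠ t/2; if μ has an atom of mass c > 0 at t, then μ([0,t)) = t/2 − c/2 (i.e., F jumps from t/2 − c/2 to t/2 + c/2 at t). -/

import Mathlib

/-!
Write `F t = μ [0, t]`. For `a ≤ b` in `[0, 1]`, subtracting the equation at `a` from the one at
`b` gives `∫_{(a, b]} s dμ = (F a + F b) μ (a, b]`, so whenever `F a < F b` the sum `F a + F b`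
lies in `[a, b]`. On an atomless stretch where `F` is not constant, `F` increases immediately
to the right of the last point `a` at which it still takes its initial value, and letting `b ↓ a`
gives `2 F a = a`. At an atom `t`, letting `a ↑ t` instead gives `μ [0, t) + F t = t`.
-/

open MeasureTheory Set Filter Topology
open scoped ENNReal

theorem tendsto_measure_biUnion_lt {α ι : Type*} [MeasurableSpace α] {μ : Measure α}
    [LinearOrder ι] [TopologicalSpace ι] [OrderTopology ι] [FirstCountableTopology ι]
    {s : ι → Set α} {a : ι} (hm : ∀ i j, i ≤ j → j < a → s i ⊆ s j) :
    Tendsto (μ ∘ s) (𝓝[<] a) (𝓝 (μ (⋃ r < a, s r))) := by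
  by_cases ha : Order.IsSuccPrelimit a
  · have : (atTop : Filter (Iio a)).IsCountablyGenerated := by
      rw [← comap_coe_Iio_nhdsLT a ha]
      infer_instance
    simp_rw [← map_coe_Iio_atTop a ha, tendsto_map'_iff, ← mem_Iio, biUnion_eq_iUnion]
    exact tendsto_measure_iUnion_atTop fun i j h ↦ hm i j h j.2
  · obtain ⟨b, hba⟩ := Order.not_isSuccPrelimit_iff.mp ha
    simp [hba.nhdsLT]

theorem Monotone.exists_eq_forall_lt_of_continuousWithinAt {β : Type*} [LinearOrder β]
    [TopologicalSpace β] [OrderClosedTopology β] {f : ℝ → β} (hf : Monotone f) {s r : ℝ}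
    (hsr : f s < f r) (hcont : ∀ x ∈ Ioc s r, ContinuousWithinAt f (Iio x) x) :
    ∃ a ∈ Ico s r, f a = f s ∧ ∀ x ∈ Ioc a r, f a < f x := by
  set S := {x | x ∈ Icc s r ∧ f x ≤ f s}
  have hsS : s ∈ S := ⟨⟨le_rfl, (hf.reflect_lt hsr).le⟩, le_rfl⟩
  have hSbdd : BddAbove S := ⟨r, fun x hx ↦ hx.1.2⟩
  set a := sSup S
  have hsa : s ≤ a := le_csSup hSbdd hsS
  have har : a ≤ r := csSup_le ⟨s, hsS⟩ fun x hx ↦ hx.1.2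
  have hfa : f a = f s := by
    refine le_antisymm ?_ (hf hsa)
    rcases hsa.eq_or_lt with h | hsa
    · rw [← h]
    -- `f` is at most `f s` left of `a`, hence at `a` by left continuity
    refine _root_.le_of_tendsto (hcont a ⟨hsa, har⟩) (eventually_nhdsWithin_of_forall fun x hx ↦ ?_)
    obtain ⟨y, hyS, hxy⟩ := exists_lt_of_lt_csSup ⟨s, hsS⟩ hx
    exact (hf hxy.le).trans hyS.2
  have hlt : ∀ x ∈ Ioc a r, f a < f x := fun x hx ↦ hfa ▸ lt_of_not_ge fun hxs ↦
    hx.1.not_ge (le_csSup hSbdd ⟨⟨hsa.trans hx.1.le, hx.2⟩, hxs⟩)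
  exact ⟨a, ⟨hsa, har.lt_of_ne fun h ↦ hsr.ne (h ▸ hfa).symm⟩, hfa, hlt⟩

section
variable {μ : Measure ℝ≥0∞}

theorem monotone_measure_Icc_ofReal (μ : Measure ℝ≥0∞) :
    Monotone fun r : ℝ ↦ μ (Icc 0 (ENNReal.ofReal r)) :=
  fun _ _ h ↦ measure_mono (Icc_subset_Icc_right (ENNReal.ofReal_le_ofReal h))

theorem tendsto_measure_Icc_ofReal_nhdsGT [IsFiniteMeasure μ] (a : ℝ) :
    Tendsto (fun r : ℝ ↦ μ (Icc 0 (ENNReal.ofReal r))) (𝓝[>] a)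
      (𝓝 (μ (Icc 0 (ENNReal.ofReal a)))) := by
  have hInter : ⋂ r > a, Icc 0 (ENNReal.ofReal r) = Icc 0 (ENNReal.ofReal a) := by
    refine Subset.antisymm (fun y hy ↦ ⟨zero_le, ?_⟩)
      (subset_iInter₂ fun r hr ↦ Icc_subset_Icc_right (ENNReal.ofReal_le_ofReal hr.le))
    have hlim := (ENNReal.continuous_ofReal.tendsto a).mono_left (nhdsWithin_le_nhds (s := Ioi a))
    exact ge_of_tendsto hlim (eventually_nhdsWithin_of_forall fun r hr ↦ (mem_iInter₂.mp hy r hr).2)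
  rw [← hInter]
  exact tendsto_measure_biInter_gt (fun _ _ ↦ measurableSet_Icc.nullMeasurableSet)
    (fun _ _ _ h ↦ Icc_subset_Icc_right (ENNReal.ofReal_le_ofReal h))
    ⟨a + 1, by linarith, measure_ne_top _ _⟩

theorem tendsto_measure_Icc_ofReal_nhdsLT {t : ℝ} (ht : 0 < t) :
    Tendsto (fun r : ℝ ↦ μ (Icc 0 (ENNReal.ofReal r))) (𝓝[<] t)
      (𝓝 (μ (Ico 0 (ENNReal.ofReal t)))) := by
  have hUnion : ⋃ r < t, Icc 0 (ENNReal.ofReal r) = Ico 0 (ENNReal.ofReal t) := by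
    refine Subset.antisymm (iUnion₂_subset fun r hr ↦ Icc_subset_Ico_right
      ((ENNReal.ofReal_lt_ofReal_iff ht).mpr hr)) fun y hy ↦ ?_
    refine mem_iUnion₂.mpr ⟨y.toReal, ENNReal.toReal_lt_of_lt_ofReal hy.2, zero_le, ?_⟩
    rw [ENNReal.ofReal_toReal hy.2.ne_top]
  rw [← hUnion]
  exact tendsto_measure_biUnion_lt fun _ _ h _ ↦ Icc_subset_Icc_right (ENNReal.ofReal_le_ofReal h)

theorem measure_Icc_eq_measure_Ico_add_measure_singleton (μ : Measure ℝ≥0∞) (T : ℝ≥0∞) :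
    μ (Icc 0 T) = μ (Ico 0 T) + μ {T} := by
  rw [← Ico_union_right zero_le, measure_union (disjoint_singleton_right.mpr (lt_irrefl T ·.2))
    (measurableSet_singleton T)]

theorem continuousWithinAt_measure_Icc_ofReal {t : ℝ} (ht : 0 < t)
    (h : μ {ENNReal.ofReal t} = 0) :
    ContinuousWithinAt (fun r : ℝ ↦ μ (Icc 0 (ENNReal.ofReal r))) (Iio t) t := by
  rw [ContinuousWithinAt, measure_Icc_eq_measure_Ico_add_measure_singleton, h, add_zero]
  exact tendsto_measure_Icc_ofReal_nhdsLT ht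

theorem measure_Icc_add_measure_Icc_mem_Icc [IsFiniteMeasure μ] {A B : ℝ≥0∞} (hAB : A ≤ B)
    (hA : ∫⁻ s in Icc 0 A, s ∂μ = μ (Icc 0 A) ^ 2) (hB : ∫⁻ s in Icc 0 B, s ∂μ = μ (Icc 0 B) ^ 2)
    (hlt : μ (Icc 0 A) < μ (Icc 0 B)) :
    μ (Icc 0 A) + μ (Icc 0 B) ∈ Icc A B := by
  have hsplit : Icc 0 B = Icc 0 A ∪ Ioc A B := (Icc_union_Ioc_eq_Icc zero_le hAB).symm
  have hdisj : Disjoint (Icc 0 A) (Ioc A B) :=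
    (Iic_disjoint_Ioc le_rfl).mono_left Icc_subset_Iic_self
  set c := μ (Ioc A B)
  have hμB : μ (Icc 0 B) = μ (Icc 0 A) + c := by
    rw [hsplit, measure_union hdisj measurableSet_Ioc]
  have hc : c ≠ 0 := fun h ↦ hlt.ne' (by rw [hμB, h, add_zero])
  have hIoc : ∫⁻ s in Ioc A B, s ∂μ = (μ (Icc 0 A) + μ (Icc 0 B)) * c := by
    have h := hB
    rw [hsplit, lintegral_union measurableSet_Ioc hdisj, hA, ← hsplit, hμB,
      show (μ (Icc 0 A) + c) ^ 2 = μ (Icc 0 A) ^ 2 + (μ (Icc 0 A) + (μ (Icc 0 A) + c)) * c by ring]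
      at h
    rw [hμB]
    exact (ENNReal.add_right_inj (ENNReal.pow_ne_top (measure_ne_top μ _))).mp h
  constructor
  · refine (ENNReal.mul_le_mul_iff_left hc (measure_ne_top μ _)).mp ?_
    calc A * c = ∫⁻ _ in Ioc A B, A ∂μ := (setLIntegral_const _ _).symm
      _ ≤ ∫⁻ s in Ioc A B, s ∂μ := setLIntegral_mono' measurableSet_Ioc fun _ hs ↦ hs.1.le
      _ = _ := hIoc
  · refine (ENNReal.mul_le_mul_iff_left hc (measure_ne_top μ _)).mp ?_
    calc _ = ∫⁻ s in Ioc A B, s ∂μ := hIoc.symm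
      _ ≤ ∫⁻ _ in Ioc A B, B ∂μ := setLIntegral_mono' measurableSet_Ioc fun _ hs ↦ hs.2
      _ = B * c := setLIntegral_const _ _

def PartialMomentEqSq (μ : Measure ℝ≥0∞) : Prop :=
  ∀ t ∈ Icc (0 : ℝ) 1, ∫⁻ s in Icc 0 (ENNReal.ofReal t), s ∂μ = μ (Icc 0 (ENNReal.ofReal t)) ^ 2

theorem measure_Icc_ofReal_add_mem_Icc [IsFiniteMeasure μ] (hμ : PartialMomentEqSq μ) {a b : ℝ}
    (ha : 0 ≤ a) (hab : a ≤ b) (hb : b ≤ 1)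
    (hlt : μ (Icc 0 (ENNReal.ofReal a)) < μ (Icc 0 (ENNReal.ofReal b))) :
    μ (Icc 0 (ENNReal.ofReal a)) + μ (Icc 0 (ENNReal.ofReal b))
      ∈ Icc (ENNReal.ofReal a) (ENNReal.ofReal b) :=
  measure_Icc_add_measure_Icc_mem_Icc (ENNReal.ofReal_le_ofReal hab) (hμ a ⟨ha, hab.trans hb⟩)
    (hμ b ⟨ha.trans hab, hb⟩) hlt

theorem measure_Icc_ofReal_eq_half_of_forall_lt [IsFiniteMeasure μ] (hμ : PartialMomentEqSq μ)
    {a b : ℝ} (ha : 0 ≤ a) (hab : a < b) (hb : b ≤ 1)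
    (hlt : ∀ x ∈ Ioc a b, μ (Icc 0 (ENNReal.ofReal a)) < μ (Icc 0 (ENNReal.ofReal x))) :
    μ (Icc 0 (ENNReal.ofReal a)) = ENNReal.ofReal (a / 2) := by
  set Fa := μ (Icc 0 (ENNReal.ofReal a))
  have hmem : ∀ᶠ x in 𝓝[>] a, Fa + μ (Icc 0 (ENNReal.ofReal x))
      ∈ Icc (ENNReal.ofReal a) (ENNReal.ofReal x) :=
    eventually_of_mem (Ioc_mem_nhdsGT hab) fun x hx ↦
      measure_Icc_ofReal_add_mem_Icc hμ ha hx.1.le (hx.2.trans hb) (hlt x hx)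
  have hsum : Tendsto (fun x ↦ Fa + μ (Icc 0 (ENNReal.ofReal x))) (𝓝[>] a) (𝓝 (Fa + Fa)) :=
    tendsto_const_nhds.add (tendsto_measure_Icc_ofReal_nhdsGT a)
  have hofReal : Tendsto ENNReal.ofReal (𝓝[>] a) (𝓝 (ENNReal.ofReal a)) :=
    (ENNReal.continuous_ofReal.tendsto a).mono_left nhdsWithin_le_nhds
  have h2 : Fa + Fa = ENNReal.ofReal a := le_antisymm
    (le_of_tendsto_of_tendsto hsum hofReal (hmem.mono fun _ hx ↦ hx.2))
    (ge_of_tendsto hsum (hmem.mono fun _ hx ↦ hx.1))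
  rw [ENNReal.ofReal_div_of_pos two_pos, ENNReal.ofReal_ofNat, ENNReal.eq_div_iff two_ne_zero
    ENNReal.ofNat_ne_top, two_mul, h2]

theorem two_mul_measure_Ico_add_measure_singleton [IsFiniteMeasure μ]
    (hμ : PartialMomentEqSq μ) {t : ℝ} (ht : t ∈ Icc (0 : ℝ) 1) (hatom : 0 < μ {ENNReal.ofReal t}) :
    2 * μ (Ico 0 (ENNReal.ofReal t)) + μ {ENNReal.ofReal t} = ENNReal.ofReal t := by
  rcases ht.1.eq_or_lt with rfl | ht0
  · have h := hμ 0 ⟨le_rfl, zero_le_one⟩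
    rw [ENNReal.ofReal_zero, Icc_self, lintegral_singleton, zero_mul, eq_comm,
      pow_eq_zero_iff two_ne_zero] at h
    exact absurd h (by simpa using hatom.ne')
  set Ft := μ (Icc 0 (ENNReal.ofReal t))
  set L := μ (Ico 0 (ENNReal.ofReal t))
  have hFt : Ft = L + μ {ENNReal.ofReal t} := measure_Icc_eq_measure_Ico_add_measure_singleton _ _
  have hmem : ∀ᶠ r in 𝓝[<] t, μ (Icc 0 (ENNReal.ofReal r)) + Ft
      ∈ Icc (ENNReal.ofReal r) (ENNReal.ofReal t) := by
    refine eventually_of_mem (Ico_mem_nhdsLT ht0) fun r hr ↦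
      measure_Icc_ofReal_add_mem_Icc hμ hr.1 hr.2.le ht.2 ?_
    calc μ (Icc 0 (ENNReal.ofReal r)) ≤ L := measure_mono (Icc_subset_Ico_right
          ((ENNReal.ofReal_lt_ofReal_iff ht0).mpr hr.2))
      _ < Ft := hFt ▸ ENNReal.lt_add_right (measure_ne_top μ _) hatom.ne'
  have hsum : Tendsto (fun r ↦ μ (Icc 0 (ENNReal.ofReal r)) + Ft) (𝓝[<] t) (𝓝 (L + Ft)) :=
    (tendsto_measure_Icc_ofReal_nhdsLT ht0).add tendsto_const_nhds
  have hofReal : Tendsto ENNReal.ofReal (𝓝[<] t) (𝓝 (ENNReal.ofReal t)) :=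
    (ENNReal.continuous_ofReal.tendsto t).mono_left nhdsWithin_le_nhds
  have h2 : L + Ft = ENNReal.ofReal t := le_antisymm
    (le_of_tendsto hsum (hmem.mono fun _ hx ↦ hx.2))
    (le_of_tendsto_of_tendsto hofReal hsum (hmem.mono fun _ hx ↦ hx.1))
  rw [two_mul, add_assoc, ← hFt, h2]

end

theorem stmt3 (μ : Measure ℝ≥0∞) [IsProbabilityMeasure μ]
    (hRDE : ∀ t ∈ Set.Icc (0:ℝ) 1,
      ∫⁻ s in Set.Icc 0 (ENNReal.ofReal t), s ∂μ
        = (μ (Set.Icc 0 (ENNReal.ofReal t)))^2) :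
    (∀ s u : ℝ, 0 ≤ s → s ≤ u → u ≤ 1 →
      (∀ r ∈ Set.Ico s u, μ {ENNReal.ofReal r} = 0) →
      (∀ r ∈ Set.Ico s u,
        μ (Set.Icc 0 (ENNReal.ofReal r)) ≠ ENNReal.ofReal (r/2)) →
      ∀ r ∈ Set.Ico s u,
        μ (Set.Icc 0 (ENNReal.ofReal r)) = μ (Set.Icc 0 (ENNReal.ofReal s)))
    ∧ (∀ t ∈ Set.Icc (0:ℝ) 1, 0 < μ {ENNReal.ofReal t} →
        2 * μ (Set.Ico 0 (ENNReal.ofReal t)) + μ {ENNReal.ofReal t}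
          = ENNReal.ofReal t) := by
  refine ⟨fun s u hs _ hu hatom hne r hr ↦ ?_, fun t ht hatom ↦
    two_mul_measure_Ico_add_measure_singleton hRDE ht hatom⟩
  by_contra hFr
  have hmono := monotone_measure_Icc_ofReal μ
  obtain ⟨a, ⟨hsa, har⟩, -, hlt⟩ := hmono.exists_eq_forall_lt_of_continuousWithinAt
    ((hmono hr.1).lt_of_ne' hFr) fun x hx ↦ continuousWithinAt_measure_Icc_ofReal
      (hs.trans_lt hx.1) (hatom x ⟨hx.1.le, hx.2.trans_lt hr.2⟩)
  exact hne a ⟨hsa, har.trans hr.2⟩ (measure_Icc_ofReal_eq_half_of_forall_lt hRDE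
    (hs.trans hsa) har (hr.2.le.trans hu) hlt)
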